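/- arXiv:2602.21478 — 2 statements merged into one kernel-verified Lean document; each statement's English description precedes it below -/
import Mathlib

section
/- Let v_1,…,v_d be an orthonormal basis of ℝ^d, e a unit vector, and σ_2,…,σ_d real numbers. Then ‖ (Σ_{i=2}^d σ_i v_i v_i⊤) e e⊤ ‖_op ≤ (max_{j≥2} |σ_j|) · ‖v_1 − e‖. -/
/-!
Writing `A = ∑_{i ≠ 0} σ i • b i b iᵀ`, composing with the rank-one operator `e eᵀ` makes the
operator norm `‖A e‖ · ‖e‖ = ‖A e‖`. Since `A e = ∑_{i ≠ 0} σ i ⟪b i, e⟫ • b i`, orthonormality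
gives `‖A e‖ ≤ C ‖∑_{i ≠ 0} ⟪b i, e⟫ • b i‖ = C ‖e - ⟪b 0, e⟫ • b 0‖`, and the orthogonal
projection `⟪b 0, e⟫ • b 0` of `e` onto the line through `b 0` is at least as close to `e` as
`b 0` itself.
-/

open Matrix Finset
open InnerProductSpace

section
variable {𝕜 : Type*} [RCLike 𝕜] {n : Type*} [Fintype n] [DecidableEq n]

theorem Matrix.toEuclideanCLM_vecMulVec_star (x y : EuclideanSpace 𝕜 n) :
    toEuclideanCLM (𝕜 := 𝕜) (n := n) (vecMulVec x.ofLp (star y.ofLp)) = rankOne 𝕜 x y := by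
  apply ContinuousLinearMap.coe_injective
  rw [coe_toEuclideanCLM_eq_toEuclideanLin, ← symm_toEuclideanLin_rankOne,
    LinearEquiv.apply_symm_apply]

theorem Matrix.norm_toEuclideanCLM_mul_vecMulVec_star (A : Matrix n n 𝕜)
    (x y : EuclideanSpace 𝕜 n) :
    ‖toEuclideanCLM (𝕜 := 𝕜) (n := n) (A * vecMulVec x.ofLp (star y.ofLp))‖ =
      ‖toEuclideanCLM (𝕜 := 𝕜) (n := n) A x‖ * ‖y‖ := by
  rw [map_mul, toEuclideanCLM_vecMulVec_star, ContinuousLinearMap.mul_def,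
    comp_rankOne, norm_rankOne]

theorem Matrix.toEuclideanCLM_sum_smul_vecMulVec_star {ι : Type*} (s : Finset ι) (c : ι → 𝕜)
    (v : ι → EuclideanSpace 𝕜 n) (x : EuclideanSpace 𝕜 n) :
    toEuclideanCLM (𝕜 := 𝕜) (n := n) (∑ i ∈ s, c i • vecMulVec (v i).ofLp (star (v i).ofLp)) x =
      ∑ i ∈ s, (c i * ⟪v i, x⟫_𝕜) • v i := by
  simp [toEuclideanCLM_vecMulVec_star, mul_smul]

end

section
variable {𝕜 E ι : Type*} [RCLike 𝕜] [NormedAddCommGroup E] [InnerProductSpace 𝕜 E]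

theorem Orthonormal.norm_sum_smul_sq {v : ι → E} (hv : Orthonormal 𝕜 v) (s : Finset ι)
    (a : ι → 𝕜) : ‖∑ i ∈ s, a i • v i‖ ^ 2 = ∑ i ∈ s, ‖a i‖ ^ 2 := by
  rw [@norm_sq_eq_re_inner 𝕜, hv.inner_sum, map_sum]
  simp_rw [RCLike.conj_mul, ← RCLike.ofReal_pow, RCLike.ofReal_re]

theorem Orthonormal.norm_sum_mul_smul_le {v : ι → E} (hv : Orthonormal 𝕜 v) {s : Finset ι}
    {c : ι → 𝕜} {C : ℝ} (hC : 0 ≤ C) (hc : ∀ i ∈ s, ‖c i‖ ≤ C) (a : ι → 𝕜) :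
    ‖∑ i ∈ s, (c i * a i) • v i‖ ≤ C * ‖∑ i ∈ s, a i • v i‖ := by
  refine le_of_sq_le_sq ?_ (by positivity)
  rw [mul_pow, hv.norm_sum_smul_sq, hv.norm_sum_smul_sq, Finset.mul_sum]
  gcongr with i hi
  rw [norm_mul, mul_pow]
  gcongr
  exact hc i hi

theorem OrthonormalBasis.sum_filter_ne_inner_smul [Fintype ι] [DecidableEq ι]
    (b : OrthonormalBasis ι 𝕜 E) (i₀ : ι) (x : E) :
    ∑ i ∈ univ.filter (· ≠ i₀), ⟪b i, x⟫_𝕜 • b i = x - ⟪b i₀, x⟫_𝕜 • b i₀ := by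
  rw [eq_sub_iff_add_eq, Finset.filter_ne', Finset.sum_erase_add _ _ (mem_univ i₀), b.sum_repr']

theorem norm_sub_inner_smul_le_norm_sub {v : E} (hv : ‖v‖ = 1) (x : E) :
    ‖x - ⟪v, x⟫_𝕜 • v‖ ≤ ‖x - v‖ := by
  rw [← Submodule.starProjection_unit_singleton 𝕜 hv, Submodule.starProjection_minimal]
  exact ciInf_le ⟨0, by rintro _ ⟨_, rfl⟩; positivity⟩
    (⟨v, Submodule.mem_span_singleton_self v⟩ : 𝕜 ∙ v)

end

/-- Rotation bound: for an orthonormal basis `(b i)` of `ℝ^d`, a unit vector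
`e`, and coefficients `σ_i` with `|σ_i| ≤ C` for `i ≠ 0`, the operator norm of
`(Σ_{i≠0} σ_i b_i b_i⊤) e e⊤` is at most `C · ‖b 0 − e‖`. -/
theorem rotation_bound {d : ℕ} (hd : 1 ≤ d)
    (b : OrthonormalBasis (Fin d) ℝ (EuclideanSpace ℝ (Fin d)))
    (e : EuclideanSpace ℝ (Fin d)) (he : ‖e‖ = 1)
    (σ : Fin d → ℝ) (C : ℝ) (hC : 0 ≤ C)
    (hσ : ∀ i, i ≠ (⟨0, hd⟩ : Fin d) → |σ i| ≤ C) :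
    ‖Matrix.toEuclideanCLM (𝕜 := ℝ) (n := Fin d)
        ((∑ i ∈ univ.filter (· ≠ (⟨0, hd⟩ : Fin d)),
            σ i • vecMulVec (b i : Fin d → ℝ) (b i : Fin d → ℝ)) *
          vecMulVec (e : Fin d → ℝ) (e : Fin d → ℝ))‖
      ≤ C * ‖b ⟨0, hd⟩ - e‖ := by
  set i₀ : Fin d := ⟨0, hd⟩
  set s := univ.filter (· ≠ i₀)
  have hσ' : ∀ i ∈ s, ‖σ i‖ ≤ C := fun i hi => hσ i (mem_filter.1 hi).2
  have hcomp := norm_toEuclideanCLM_mul_vecMulVec_star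
    (∑ i ∈ s, σ i • vecMulVec (b i : Fin d → ℝ) (b i : Fin d → ℝ)) e e
  have happly := toEuclideanCLM_sum_smul_vecMulVec_star s σ b e
  simp only [star_trivial] at hcomp happly
  calc _ = ‖∑ i ∈ s, (σ i * ⟪b i, e⟫_ℝ) • b i‖ := by rw [hcomp, happly, he, mul_one]
    _ ≤ C * ‖e - ⟪b i₀, e⟫_ℝ • b i₀‖ := by
        rw [← b.sum_filter_ne_inner_smul]
        exact b.orthonormal.norm_sum_mul_smul_le hC hσ' _
    _ ≤ C * ‖b i₀ - e‖ := by
        rw [norm_sub_rev (b i₀)]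
        gcongr
        exact norm_sub_inner_smul_le_norm_sub (b.orthonormal.1 i₀) e
end

section
/- Let Σ̃ be a d×d positive definite symmetric matrix, Σ̂ a d×d symmetric positive semidefinite matrix, ν ∈ ℝ^d nonzero, λ > 0 with λ ≤ λ_min(Σ̃). If ‖Σ̃^{-1} Σ̂ − I‖_op ≤ ε and λ ‖Σ̃^{-1}‖_op ≤ ε with ε < 1/2, then the functions α̂(z) := ν⊤(Σ̂ + λI)^{-1}φ(z) and α̃(z) := ν⊤ Σ̃^{-1} φ(z) satisfy, for the empirical measure P_T with second-moment matrix Σ̂, ‖α̂ − α̃‖²_{L²(P_T)} = ν⊤((Σ̂+λI)^{-1} − Σ̃^{-1}) Σ̂ ((Σ̂+λI)^{-1} − Σ̃^{-1}) ν ≤ C ε² ν⊤ Σ̃^{-1} ν for an absolute constant C. -/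
/-!
Writing `Σ̃ = Lᴴ L`, the matrix `Σ̃⁻¹ X` is similar to the symmetric matrix `L⁻ᴴ X L⁻¹`, so
`‖Σ̃⁻¹ X‖ ≤ ε` puts its spectrum in `[-ε, ε]`, i.e. `-ε Σ̃ ≤ X ≤ ε Σ̃` in the Loewner order. Applied
to `X = Σ̂ - Σ̃` and `X = λ I`, this gives, for `A = Σ̂ + λ I`, both `Σ̃ ≤ 2 A` and
`|Σ̃ - A| ≤ 2ε Σ̃`. With `u = Σ̃⁻¹ ν` and `w = (A⁻¹ - Σ̃⁻¹) ν` one has `A w = (Σ̃ - A) u`, hence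
`‖w‖²_Σ̃ ≤ 2 w ⬝ A w = 2 w ⬝ (Σ̃ - A) u`, which polarization bounds by `‖w‖²_Σ̃ / 2 + 8 ε² ‖u‖²_Σ̃`.
Finally `‖α̂ - α̃‖² = w ⬝ Σ̂ w ≤ (1 + ε) ‖w‖²_Σ̃` and `‖u‖²_Σ̃ = ν ⬝ Σ̃⁻¹ ν`.
-/

open Matrix

namespace Matrix

variable {n : Type*} [Fintype n]

theorem IsHermitian.dotProduct_mulVec_comm {D : Matrix n n ℝ} (hD : D.IsHermitian)
    (u w : n → ℝ) : u ⬝ᵥ D *ᵥ w = w ⬝ᵥ D *ᵥ u := by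
  rw [dotProduct_mulVec, ← mulVec_transpose, ← conjTranspose_eq_transpose_of_trivial, hD.eq,
    dotProduct_comm]

theorem IsHermitian.dotProduct_mul_mul_mulVec {M : Matrix n n ℝ} (hM : M.IsHermitian)
    (S : Matrix n n ℝ) (v : n → ℝ) :
    v ⬝ᵥ (M * S * M) *ᵥ v = (M *ᵥ v) ⬝ᵥ S *ᵥ (M *ᵥ v) := by
  rw [← mulVec_mulVec, ← mulVec_mulVec, hM.dotProduct_mulVec_comm, dotProduct_comm]

theorem two_mul_dotProduct_mulVec_le {B D : Matrix n n ℝ} (hD : D.IsHermitian) {c : ℝ}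
    (h : ∀ x, |x ⬝ᵥ D *ᵥ x| ≤ c * (x ⬝ᵥ B *ᵥ x)) {t : ℝ} (ht : 0 < t) (w u : n → ℝ) :
    2 * (w ⬝ᵥ D *ᵥ u) ≤ c * (t * (w ⬝ᵥ B *ᵥ w) + (u ⬝ᵥ B *ᵥ u) / t) := by
  have hplus := (le_abs_self _).trans (h (t • w + u))
  have hminus := (neg_le_abs _).trans (h (t • w - u))
  have hsymm := hD.dotProduct_mulVec_comm u w
  simp only [mulVec_add, mulVec_sub, mulVec_smul, dotProduct_add, dotProduct_sub, add_dotProduct,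
    sub_dotProduct, dotProduct_smul, smul_dotProduct, smul_eq_mul] at hplus hminus
  refine le_of_mul_le_mul_left ?_ (by positivity : 0 < 2 * t)
  have hscale : 2 * t * (c * (t * (w ⬝ᵥ B *ᵥ w) + (u ⬝ᵥ B *ᵥ u) / t))
      = c * (2 * t ^ 2 * (w ⬝ᵥ B *ᵥ w) + 2 * (u ⬝ᵥ B *ᵥ u)) := by
    field_simp
  rw [hscale]
  linear_combination hplus + hminus - 2 * t * hsymm

theorem dotProduct_mulVec_smul_sum_vecMulVec_self {ι : Type*} [Fintype ι] (c : ℝ)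
    (φ : ι → n → ℝ) (v : n → ℝ) :
    v ⬝ᵥ (c • ∑ t, vecMulVec (φ t) (φ t)) *ᵥ v = c * ∑ t, (φ t ⬝ᵥ v) ^ 2 := by
  simp [smul_mulVec, sum_mulVec, vecMulVec_mulVec, dotProduct_sum, sq, dotProduct_comm]

theorem posSemidef_smul_sum_vecMulVec_self {ι : Type*} [Fintype ι] {c : ℝ} (hc : 0 ≤ c)
    (φ : ι → n → ℝ) : (c • ∑ t, vecMulVec (φ t) (φ t)).PosSemidef :=
  (posSemidef_sum _ fun t _ => by simpa using posSemidef_vecMulVec_self_star (φ t)).smul hc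

variable [DecidableEq n]

theorem spectrum_subset_Icc_of_opNorm_le {A : Matrix n n ℝ} {c : ℝ}
    (h : ‖toEuclideanCLM (𝕜 := ℝ) (n := n) A‖ ≤ c) :
    spectrum ℝ A ⊆ Set.Icc (-c) c := by
  intro μ hμ
  rw [← AlgEquiv.spectrum_eq (toEuclideanCLM (𝕜 := ℝ) (n := n))] at hμ
  have hμA := Metric.mem_closedBall.1 (spectrum.subset_closedBall_norm_mul _ hμ)
  rw [dist_zero_right, Real.norm_eq_abs] at hμA
  have hA : ‖toEuclideanCLM (𝕜 := ℝ) (n := n) A‖ *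
      ‖(1 : EuclideanSpace ℝ n →L[ℝ] EuclideanSpace ℝ n)‖ ≤ c :=
    (mul_le_of_le_one_right (norm_nonneg _) ContinuousLinearMap.norm_id_le).trans h
  exact abs_le.1 (hμA.trans hA)

open scoped MatrixOrder in
theorem PosDef.neg_smul_le_and_le_smul_of_opNorm_inv_mul_le {B M : Matrix n n ℝ}
    (hB : B.PosDef) (hM : M.IsHermitian) {c : ℝ}
    (h : ‖toEuclideanCLM (𝕜 := ℝ) (n := n) (B⁻¹ * M)‖ ≤ c) :
    -(c • B) ≤ M ∧ M ≤ c • B := by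
  obtain ⟨y, hy, rfl⟩ := CStarAlgebra.isStrictlyPositive_iff_eq_star_mul_self.mp
    hB.isStrictlyPositive
  lift y to (Matrix n n ℝ)ˣ using hy
  set K := star (↑y⁻¹ : Matrix n n ℝ) * M * (↑y⁻¹ : Matrix n n ℝ) with hK
  have hKsa : IsSelfAdjoint K := hM.isSelfAdjoint.conjugate' _
  have hMK : M = star (y : Matrix n n ℝ) * K * y := by
    simp only [hK, ← mul_assoc, ← star_mul, Units.inv_mul]
    simp [mul_assoc]
  have hspec : spectrum ℝ K ⊆ Set.Icc (-c) c := by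
    have hconj : (star (y : Matrix n n ℝ) * y)⁻¹ * M = (↑y⁻¹ : Matrix n n ℝ) * K * y := by
      rw [Matrix.mul_inv_rev, ← Matrix.coe_units_inv, star_eq_conjTranspose,
        ← conjTranspose_nonsing_inv, ← Matrix.coe_units_inv, hK]
      simp [mul_assoc, star_eq_conjTranspose]
    rw [← spectrum.units_conjugate' (u := y), ← hconj]
    exact spectrum_subset_Icc_of_opNorm_le h
  have hKle : K ≤ algebraMap ℝ _ c :=
    (le_algebraMap_iff_spectrum_le hKsa).2 fun x hx => (hspec hx).2
  have hKge : algebraMap ℝ _ (-c) ≤ K :=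
    (algebraMap_le_iff_le_spectrum hKsa).2 fun x hx => (hspec hx).1
  constructor
  · simpa [← hMK, Algebra.algebraMap_eq_smul_one] using
      star_left_conjugate_le_conjugate hKge (y : Matrix n n ℝ)
  · simpa [← hMK, Algebra.algebraMap_eq_smul_one] using
      star_left_conjugate_le_conjugate hKle (y : Matrix n n ℝ)

open scoped MatrixOrder in
theorem PosDef.abs_dotProduct_mulVec_le_of_opNorm_inv_mul_le {B M : Matrix n n ℝ}
    (hB : B.PosDef) (hM : M.IsHermitian) {c : ℝ}
    (h : ‖toEuclideanCLM (𝕜 := ℝ) (n := n) (B⁻¹ * M)‖ ≤ c) (x : n → ℝ) :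
    |x ⬝ᵥ M *ᵥ x| ≤ c * (x ⬝ᵥ B *ᵥ x) := by
  obtain ⟨hlower, hupper⟩ := hB.neg_smul_le_and_le_smul_of_opNorm_inv_mul_le hM h
  have h1 := (Matrix.le_iff.1 hlower).dotProduct_mulVec_nonneg x
  have h2 := (Matrix.le_iff.1 hupper).dotProduct_mulVec_nonneg x
  simp only [star_trivial, sub_neg_eq_add, add_mulVec, sub_mulVec, smul_mulVec, dotProduct_add,
    dotProduct_sub, dotProduct_smul, smul_eq_mul] at h1 h2
  exact abs_le.2 ⟨by linarith, by linarith⟩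

theorem PosDef.mul_dotProduct_self_le_of_mul_opNorm_inv_le {B : Matrix n n ℝ} (hB : B.PosDef)
    {lam c : ℝ} (hlam : 0 ≤ lam) (h : lam * ‖toEuclideanCLM (𝕜 := ℝ) (n := n) B⁻¹‖ ≤ c)
    (x : n → ℝ) : lam * (x ⬝ᵥ x) ≤ c * (x ⬝ᵥ B *ᵥ x) := by
  have hnorm : ‖toEuclideanCLM (𝕜 := ℝ) (n := n) (B⁻¹ * lam • 1)‖ ≤ c := by
    rwa [Matrix.mul_smul, mul_one, map_smul, norm_smul, Real.norm_of_nonneg hlam]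
  have hx := hB.abs_dotProduct_mulVec_le_of_opNorm_inv_mul_le
    (isHermitian_one.smul (IsSelfAdjoint.all lam)) hnorm x
  rw [smul_mulVec, one_mulVec, dotProduct_smul, smul_eq_mul] at hx
  exact (le_abs_self _).trans hx

theorem PosDef.dotProduct_mulVec_inv_sub_inv_le {A B : Matrix n n ℝ} (hA : A.PosDef)
    (hB : B.PosDef) {δ : ℝ} (hδ : 0 < δ)
    (hAB : ∀ x, |x ⬝ᵥ (B - A) *ᵥ x| ≤ δ * (x ⬝ᵥ B *ᵥ x))
    (hBA : ∀ x, x ⬝ᵥ B *ᵥ x ≤ 2 * (x ⬝ᵥ A *ᵥ x)) (ν : n → ℝ) :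
    ((A⁻¹ - B⁻¹) *ᵥ ν) ⬝ᵥ B *ᵥ ((A⁻¹ - B⁻¹) *ᵥ ν) ≤ 4 * δ ^ 2 * (ν ⬝ᵥ B⁻¹ *ᵥ ν) := by
  set w := (A⁻¹ - B⁻¹) *ᵥ ν
  set u := B⁻¹ *ᵥ ν
  have hBB : B * B⁻¹ = 1 := mul_nonsing_inv _ ((isUnit_iff_isUnit_det B).1 hB.isUnit)
  have hAw : A *ᵥ w = (B - A) *ᵥ u := by
    simp only [w, u, mulVec_mulVec, mul_sub, sub_mul, hBB,
      mul_nonsing_inv _ ((isUnit_iff_isUnit_det A).1 hA.isUnit)]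
  have hBu : u ⬝ᵥ B *ᵥ u = ν ⬝ᵥ B⁻¹ *ᵥ ν := by
    rw [mulVec_mulVec, hBB, one_mulVec, dotProduct_comm]
  have hcross := two_mul_dotProduct_mulVec_le (hB.1.sub hA.1) hAB (t := 1 / (2 * δ))
    (by positivity) w u
  have hscale : δ * (1 / (2 * δ) * (w ⬝ᵥ B *ᵥ w) + (u ⬝ᵥ B *ᵥ u) / (1 / (2 * δ)))
      = (w ⬝ᵥ B *ᵥ w) / 2 + 2 * δ ^ 2 * (u ⬝ᵥ B *ᵥ u) := by
    field_simp
  have hw := hBA w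
  rw [hAw] at hw
  rw [← hBu]
  linarith

theorem dotProduct_mulVec_ridge_inv_sub_inv_le {B S : Matrix n n ℝ} (hB : B.PosDef)
    (hS : S.PosSemidef) {lam ε : ℝ} (hlam : 0 < lam) (hε0 : 0 < ε) (hε : ε < 1 / 2)
    (hSB : ∀ x, |x ⬝ᵥ (S - B) *ᵥ x| ≤ ε * (x ⬝ᵥ B *ᵥ x))
    (hlamB : ∀ x, lam * (x ⬝ᵥ x) ≤ ε * (x ⬝ᵥ B *ᵥ x)) (ν : n → ℝ) :
    (((S + lam • 1)⁻¹ - B⁻¹) *ᵥ ν) ⬝ᵥ S *ᵥ (((S + lam • 1)⁻¹ - B⁻¹) *ᵥ ν)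
      ≤ 24 * ε ^ 2 * (ν ⬝ᵥ B⁻¹ *ᵥ ν) := by
  have hA : (S + lam • 1).PosDef := PosDef.posSemidef_add hS (PosDef.one.smul hlam)
  have hSB' : ∀ x, |x ⬝ᵥ S *ᵥ x - x ⬝ᵥ B *ᵥ x| ≤ ε * (x ⬝ᵥ B *ᵥ x) := by
    simpa only [sub_mulVec, dotProduct_sub] using hSB
  have hAx : ∀ x, x ⬝ᵥ (S + lam • 1) *ᵥ x = x ⬝ᵥ S *ᵥ x + lam * (x ⬝ᵥ x) := fun x => by
    rw [add_mulVec, smul_mulVec, one_mulVec, dotProduct_add, dotProduct_smul, smul_eq_mul]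
  have hsq : ∀ x : n → ℝ, 0 ≤ x ⬝ᵥ x := fun x => dotProduct_star_self_nonneg x
  have hBx : ∀ x, 0 ≤ x ⬝ᵥ B *ᵥ x := fun x => hB.posSemidef.dotProduct_mulVec_nonneg x
  have hAB : ∀ x, |x ⬝ᵥ (B - (S + lam • 1)) *ᵥ x| ≤ 2 * ε * (x ⬝ᵥ B *ᵥ x) := fun x => by
    obtain ⟨h1, h2⟩ := abs_le.1 (hSB' x)
    have := mul_nonneg hlam.le (hsq x)
    have := hlamB x
    rw [sub_mulVec, dotProduct_sub, hAx, abs_le]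
    constructor <;> linarith
  have hBA : ∀ x, x ⬝ᵥ B *ᵥ x ≤ 2 * (x ⬝ᵥ (S + lam • 1) *ᵥ x) := fun x => by
    obtain ⟨h1, -⟩ := abs_le.1 (hSB' x)
    have := mul_nonneg hlam.le (hsq x)
    have := mul_le_mul_of_nonneg_right hε.le (hBx x)
    rw [hAx]
    linarith
  set w := ((S + lam • 1)⁻¹ - B⁻¹) *ᵥ ν
  calc w ⬝ᵥ S *ᵥ w
      ≤ (1 + ε) * (w ⬝ᵥ B *ᵥ w) := by linarith [abs_le.1 (hSB' w)]
    _ ≤ 3 / 2 * (4 * (2 * ε) ^ 2 * (ν ⬝ᵥ B⁻¹ *ᵥ ν)) :=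
        mul_le_mul (by linarith) (hA.dotProduct_mulVec_inv_sub_inv_le hB (by positivity) hAB hBA ν)
          (hBx w) (by norm_num)
    _ = 24 * ε ^ 2 * (ν ⬝ᵥ B⁻¹ *ᵥ ν) := by ring

end Matrix

/-- Full-matrix (Lai–Wei) stability plus small ridge regularization implies
directional stability: there is an absolute constant `C > 0` such that,
whenever `‖Σ̃⁻¹Σ̂ − I‖_op ≤ ε`, `λ‖Σ̃⁻¹‖_op ≤ ε`, `ε < 1/2`,
`0 < λ ≤ λ_min(Σ̃)`, the squared empirical L² distance between
`α̂(z) = ν⊤(Σ̂+λI)⁻¹φ(z)` and `α̃(z) = ν⊤Σ̃⁻¹φ(z)` equals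
`ν⊤((Σ̂+λI)⁻¹ − Σ̃⁻¹)Σ̂((Σ̂+λI)⁻¹ − Σ̃⁻¹)ν` and is at most `C ε² ν⊤Σ̃⁻¹ν`. -/
theorem fullmatrix_stability_implies_directional :
    ∃ C : ℝ, 0 < C ∧
      ∀ (d T : ℕ), 1 ≤ T →
      ∀ (φ : Fin T → Fin d → ℝ)
        (Shat Stil : Matrix (Fin d) (Fin d) ℝ)
        (ν : Fin d → ℝ) (lam ε : ℝ),
        Shat = (1 / (T : ℝ)) • ∑ t, vecMulVec (φ t) (φ t) →
        Stil.PosDef → ν ≠ 0 → 0 < lam → ε < 1/2 →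
        (∀ x : EuclideanSpace ℝ (Fin d),
          lam * ‖x‖^2 ≤ (x : Fin d → ℝ) ⬝ᵥ Stil.mulVec (x : Fin d → ℝ)) →
        ‖Matrix.toEuclideanCLM (𝕜 := ℝ) (n := Fin d) (Stil⁻¹ * Shat - 1)‖ ≤ ε →
        lam * ‖Matrix.toEuclideanCLM (𝕜 := ℝ) (n := Fin d) Stil⁻¹‖ ≤ ε →
        ((1 / (T : ℝ)) * ∑ t,
            (ν ⬝ᵥ ((Shat + lam • (1 : Matrix (Fin d) (Fin d) ℝ))⁻¹ - Stil⁻¹).mulVec (φ t))^2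
          = ν ⬝ᵥ (((Shat + lam • (1 : Matrix (Fin d) (Fin d) ℝ))⁻¹ - Stil⁻¹) * Shat *
              ((Shat + lam • (1 : Matrix (Fin d) (Fin d) ℝ))⁻¹ - Stil⁻¹)).mulVec ν) ∧
        ((1 / (T : ℝ)) * ∑ t,
            (ν ⬝ᵥ ((Shat + lam • (1 : Matrix (Fin d) (Fin d) ℝ))⁻¹ - Stil⁻¹).mulVec (φ t))^2
          ≤ C * ε^2 * (ν ⬝ᵥ Stil⁻¹.mulVec ν)) := by
  refine ⟨24, by norm_num, fun d T _ φ Shat Stil ν lam ε hS hStil hν hlam hε _ hStab hRidge => ?_⟩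
  have hShat : Shat.PosSemidef := hS ▸ posSemidef_smul_sum_vecMulVec_self (by positivity) φ
  set M := (Shat + lam • (1 : Matrix (Fin d) (Fin d) ℝ))⁻¹ - Stil⁻¹
  have hM : M.IsHermitian :=
    (PosDef.posSemidef_add hShat (PosDef.one.smul hlam)).inv.1.sub hStil.inv.1
  have hfit : 1 / (T : ℝ) * ∑ t, (ν ⬝ᵥ M *ᵥ φ t) ^ 2 = ν ⬝ᵥ (M * Shat * M) *ᵥ ν := by
    rw [hM.dotProduct_mul_mul_mulVec, hS, dotProduct_mulVec_smul_sum_vecMulVec_self]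
    simp_rw [hM.dotProduct_mulVec_comm ν]
  have hSB := hStil.abs_dotProduct_mulVec_le_of_opNorm_inv_mul_le (c := ε) (hShat.1.sub hStil.1)
    (by rwa [mul_sub, nonsing_inv_mul _ ((isUnit_iff_isUnit_det Stil).1 hStil.isUnit)])
  have hlamB := hStil.mul_dotProduct_self_le_of_mul_opNorm_inv_le hlam.le hRidge
  have hε0 : 0 < ε := pos_of_mul_pos_left
    ((mul_pos hlam (dotProduct_star_self_pos_iff.2 hν)).trans_le (hlamB ν))
    (hStil.posSemidef.dotProduct_mulVec_nonneg ν)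
  refine ⟨hfit, ?_⟩
  rw [hfit, hM.dotProduct_mul_mul_mulVec]
  exact dotProduct_mulVec_ridge_inv_sub_inv_le hStil hShat hlam hε0 hε hSB hlamB ν
end
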